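/- An automorphism φ of the symplectic vector space (l* ⊕ a ⊕ l, ω) of upper-triangular block form φ = [[ψ, c, b],[0, id, τ],[0,0,id]] (ψ : l* → l*, c : a → l*, b : l → l*, τ : l → a) satisfies φ*ω = ω if and only if ψ = id, c = τ*, and b = σ̄ + ½τ*τ for some selfadjoint σ̄ : l → l*. -/
import Mathlib


namespace Stmt15

variable {l a : Type*} [AddCommGroup l] [Module ℝ l] [AddCommGroup a] [Module ℝ a]

/-- The underlying vector space `l* ⊕ a ⊕ l`. -/
abbrev Dm (l a : Type*) [AddCommGroup l] [Module ℝ l] [AddCommGroup a] [Module ℝ a] :=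
  (Module.Dual ℝ l) × a × l

/-- The symplectic form of the standard model. -/
def Om (ωa : a →ₗ[ℝ] a →ₗ[ℝ] ℝ) : Dm l a → Dm l a → ℝ :=
  fun x y => x.1 y.2.2 + ωa x.2.1 y.2.1 - y.1 x.2.2

/-- The upper-triangular block map `φ = [[ψ,c,b],[0,id,τ],[0,0,id]]`. -/
def blockMap (ψ : Module.Dual ℝ l →ₗ[ℝ] Module.Dual ℝ l)
    (c : a →ₗ[ℝ] Module.Dual ℝ l) (b : l →ₗ[ℝ] Module.Dual ℝ l)
    (τ : l →ₗ[ℝ] a) : Dm l a → Dm l a :=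
  fun x => (ψ x.1 + c x.2.1 + b x.2.2, x.2.1 + τ x.2.2, x.2.2)

/-- the block map preserves `Om` iff `ψ = id`, `c = τ*`, and
`b = σ̄ + ½τ*τ` for some selfadjoint `σ̄`. -/
theorem blockMap_preserves_form_iff
    [FiniteDimensional ℝ l] [FiniteDimensional ℝ a]
    (ωa : a →ₗ[ℝ] a →ₗ[ℝ] ℝ)
    (hskew : ∀ X Y : a, ωa X Y = - ωa Y X)
    (hnd : ∀ X : a, (∀ Y : a, ωa X Y = 0) → X = 0)
    (ψ : Module.Dual ℝ l →ₗ[ℝ] Module.Dual ℝ l)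
    (c : a →ₗ[ℝ] Module.Dual ℝ l) (b : l →ₗ[ℝ] Module.Dual ℝ l)
    (τ : l →ₗ[ℝ] a) :
    (∀ x y : Dm l a, Om ωa (blockMap ψ c b τ x) (blockMap ψ c b τ y) = Om ωa x y)
    ↔ (ψ = LinearMap.id ∧
        (∀ (A : a) (L : l), c A L = ωa (τ L) A) ∧
        ∃ σ : l → l → ℝ,
          (∀ L₁ L₂ : l, σ L₁ L₂ = σ L₂ L₁) ∧
          (∀ L₁ L₂ : l, b L₁ L₂ = σ L₁ L₂ + (2⁻¹ : ℝ) * ωa (τ L₂) (τ L₁))) := by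
  constructor
  · intro h
    have hψ : ∀ (Z : Module.Dual ℝ l) (L : l), ψ Z L = Z L := by
      intro Z L
      have := h (Z, 0, 0) (0, 0, L)
      simpa [Om, blockMap] using this
    have hc : ∀ (A : a) (L : l), c A L = ωa (τ L) A := by
      intro A L
      have := h (0, A, 0) (0, 0, L)
      simp [Om, blockMap] at this
      have hs := hskew A (τ L)
      linarith
    have hb : ∀ L₁ L₂ : l, b L₁ L₂ + ωa (τ L₁) (τ L₂) - b L₂ L₁ = 0 := by
      intro L₁ L₂
      have := h (0, 0, L₁) (0, 0, L₂)
      simp [Om, blockMap] at this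
      linarith
    refine ⟨?_, hc, fun L₁ L₂ => b L₁ L₂ - (2⁻¹ : ℝ) * ωa (τ L₂) (τ L₁), ?_, ?_⟩
    · ext Z L; exact hψ Z L
    · intro L₁ L₂
      have h1 := hb L₁ L₂
      have h2 := hskew (τ L₁) (τ L₂)
      linarith
    · intro L₁ L₂; ring
  · rintro ⟨rfl, hc, σ, hσ, hb⟩
    rintro ⟨Z₁, A₁, L₁⟩ ⟨Z₂, A₂, L₂⟩
    simp only [Om, blockMap, LinearMap.id_coe, id_eq, LinearMap.add_apply, map_add]
    have e1 := hc A₁ L₂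
    have e2 := hc A₂ L₁
    have e3 := hb L₁ L₂
    have e4 := hb L₂ L₁
    have e5 := hσ L₁ L₂
    have s1 := hskew (τ L₂) A₁
    have s2 := hskew (τ L₂) (τ L₁)
    linarith

end Stmt15
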